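/- Let ν > 1 be a real number. Then for all x > 0, v(J_ν)(x) = −(1/(2x²))·J_ν(x)² + ((4ν² − 1)/(2x)) · ∫_0^x J_ν(t)²/t² dt. -/

import Mathlib

/-- v h = (deriv h)^2 - (second derivative of h) * h. -/
noncomputable def v (f : ℝ → ℝ) (x : ℝ) : ℝ := (deriv f x) ^ 2 - deriv^[2] f x * f x

/-- Bessel function of the first kind (for `x > 0`). -/
noncomputable def besselJ (ν : ℝ) (x : ℝ) : ℝ :=
  ∑' k : ℕ, (-1 : ℝ) ^ k / ((Nat.factorial k : ℝ) * Real.Gamma ((k : ℝ) + ν + 1)) *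
    (x / 2) ^ (2 * (k : ℝ) + ν)

/-!
For a solution `f` of Bessel's equation, substituting `f''` from the equation turns
`x * v f x + f x ^ 2 / (2 * x)` into the "energy"
`x f'² + f f' + (x - ν²/x) f² + f²/(2x)`, whose derivative is `(4ν² - 1)/2 · f²/x²`.
Writing `J_ν x = x ^ ν * P x` with `P` entire, the energy is `x ^ (2ν - 1)` times a function
continuous at `0`, so it tends to `0` as `x → 0⁺`, and `J_ν² / t² = t ^ (2ν - 2) * P²` is
integrable on `[0, x]`. The fundamental theorem of calculus then gives
`x * v J_ν x + J_ν x ² / (2x) = (4ν² - 1)/2 · ∫₀ˣ J_ν²/t²`.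
-/

open Real Filter Set Topology MeasureTheory
open scoped Nat

section PowerSeries

variable {c : ℕ → ℝ} {C : ℝ}

theorem summable_mul_pow_of_abs_le (hc : ∀ k, |c k| ≤ C / k !) {y R : ℝ} (hy : |y| ≤ R) :
    Summable fun k => c k * y ^ k := by
  refine .of_norm_bounded ((summable_pow_div_factorial R).mul_left C) fun k => ?_
  rw [norm_mul, norm_pow, Real.norm_eq_abs, Real.norm_eq_abs]
  calc |c k| * |y| ^ k ≤ C / k ! * R ^ k :=
        mul_le_mul (hc k) (pow_le_pow_left₀ (abs_nonneg y) hy k) (by positivity)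
          ((abs_nonneg _).trans (hc k))
    _ = C * (R ^ k / k !) := by ring

theorem hasDerivAt_tsum_mul_pow (hc : ∀ k, |c k| ≤ C / k !) (y : ℝ) :
    HasDerivAt (fun z => ∑' k, c k * z ^ k) (∑' k, (k + 1) * c (k + 1) * y ^ k) y := by
  set R := |y| + 1
  have hR : 0 < R := by positivity
  have hy : y ∈ Ioo (-R) R := abs_lt.mp (lt_add_one _)
  have hc' : ∀ k, |(k + 1) * c (k + 1)| ≤ C / k ! := fun k => by
    rw [abs_mul, abs_of_pos (by positivity : (0:ℝ) < k + 1)]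
    calc (k + 1) * |c (k + 1)| ≤ (k + 1) * (C / (k + 1)!) := by gcongr; exact hc (k + 1)
      _ = C / k ! := by rw [Nat.factorial_succ]; push_cast; field_simp
  have hu : Summable fun k : ℕ => |c k| * (k * R ^ (k - 1)) := by
    rw [← summable_nat_add_iff 1]
    refine (summable_mul_pow_of_abs_le hc' (abs_of_pos hR).le).abs.congr fun k => ?_
    rw [abs_mul, abs_mul, abs_pow, abs_of_pos hR, abs_of_pos (by positivity : (0:ℝ) < k + 1)]
    push_cast
    ring
  have hbound : ∀ k, ∀ z ∈ Ioo (-R) R,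
      ‖c k * (k * z ^ (k - 1))‖ ≤ |c k| * (k * R ^ (k - 1)) := by
    intro k z hz
    rw [norm_mul, Real.norm_eq_abs, norm_mul, norm_pow, Real.norm_eq_abs, Real.norm_eq_abs,
      Nat.abs_cast]
    gcongr
    exact abs_le.mpr ⟨hz.1.le, hz.2.le⟩
  refine (hasDerivAt_tsum_of_isPreconnected hu isOpen_Ioo (convex_Ioo (-R) R).isPreconnected
    (fun k z _ => (hasDerivAt_pow k z).const_mul (c k)) hbound hy
    (summable_mul_pow_of_abs_le hc le_rfl) hy).congr_deriv ?_
  rw [tsum_eq_zero_add']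
  · simp only [Nat.cast_zero, zero_mul, mul_zero, zero_add, Nat.cast_add_one, Nat.add_sub_cancel]
    exact tsum_congr fun k => by ring
  · exact (summable_mul_pow_of_abs_le hc' le_rfl).congr fun k => by push_cast; ring

end PowerSeries

theorem Real.Gamma_le_Gamma_add_nat {s : ℝ} (hs : 1 ≤ s) (k : ℕ) :
    Gamma s ≤ Gamma (s + k) := by
  induction k with
  | zero => simp
  | succ k ih =>
    have hpos : 0 < s + k := by positivity
    rw [Nat.cast_succ, ← add_assoc, Gamma_add_one hpos.ne']
    nlinarith [Gamma_pos_of_pos hpos, (le_add_of_nonneg_right k.cast_nonneg : s ≤ s + k)]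

section BesselSeries

noncomputable def besselCoeff (μ : ℝ) (k : ℕ) : ℝ := (-1) ^ k / (k ! * Gamma (k + μ + 1))

noncomputable def besselSeries (μ y : ℝ) : ℝ := ∑' k, besselCoeff μ k * y ^ k

variable {μ : ℝ}

theorem abs_besselCoeff_le (hμ : 0 ≤ μ) (k : ℕ) :
    |besselCoeff μ k| ≤ (Gamma (μ + 1))⁻¹ / k ! := by
  have hΓ : 0 < Gamma (μ + 1) := Gamma_pos_of_pos (by linarith)
  have hΓk : Gamma (μ + 1) ≤ Gamma (k + μ + 1) := by
    convert Gamma_le_Gamma_add_nat (s := μ + 1) (by linarith) k using 2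
    ring
  rw [besselCoeff, abs_div, abs_pow, abs_neg, abs_one, one_pow,
    abs_of_pos (by have := hΓ.trans_le hΓk; positivity)]
  calc 1 / (k ! * Gamma (k + μ + 1)) ≤ 1 / (k ! * Gamma (μ + 1)) := by gcongr
    _ = (Gamma (μ + 1))⁻¹ / k ! := by ring

theorem succ_mul_besselCoeff_succ (k : ℕ) :
    (k + 1) * besselCoeff μ (k + 1) = -besselCoeff (μ + 1) k := by
  rw [besselCoeff, besselCoeff, Nat.factorial_succ, pow_succ]
  push_cast
  rw [show (k : ℝ) + 1 + μ + 1 = k + (μ + 1) + 1 by ring]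
  field_simp

theorem add_one_mul_besselCoeff_zero (hμ : -1 < μ) :
    (μ + 1) * besselCoeff (μ + 1) 0 = besselCoeff μ 0 := by
  have hμ' : μ + 1 ≠ 0 := by linarith
  rw [besselCoeff, besselCoeff, Nat.cast_zero, zero_add, zero_add, Gamma_add_one hμ']
  field_simp

theorem add_one_mul_besselCoeff_succ_sub (hμ : -1 < μ) (k : ℕ) :
    (μ + 1) * besselCoeff (μ + 1) (k + 1) - besselCoeff μ (k + 1) = besselCoeff (μ + 2) k := by
  have h1 : ((k + 1 : ℕ) : ℝ) + (μ + 1) + 1 = (k + μ + 2) + 1 := by push_cast; ring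
  have h2 : ((k + 1 : ℕ) : ℝ) + μ + 1 = k + μ + 2 := by push_cast; ring
  have h3 : (k : ℝ) + (μ + 2) + 1 = (k + μ + 2) + 1 := by ring
  have hpos : 0 < (k : ℝ) + μ + 2 := by linarith [k.cast_nonneg (α := ℝ)]
  rw [besselCoeff, besselCoeff, besselCoeff, h1, h2, h3, Gamma_add_one hpos.ne',
    Nat.factorial_succ, pow_succ]
  have hΓ := Gamma_pos_of_pos hpos
  push_cast
  field_simp
  ring

theorem summable_besselCoeff_mul_pow (hμ : 0 ≤ μ) (y : ℝ) :
    Summable fun k => besselCoeff μ k * y ^ k :=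
  summable_mul_pow_of_abs_le (abs_besselCoeff_le hμ) le_rfl

theorem hasDerivAt_besselSeries (hμ : 0 ≤ μ) (y : ℝ) :
    HasDerivAt (besselSeries μ) (-besselSeries (μ + 1) y) y := by
  refine (hasDerivAt_tsum_mul_pow (abs_besselCoeff_le hμ) y).congr_deriv ?_
  simp only [besselSeries, succ_mul_besselCoeff_succ, neg_mul, tsum_neg]

theorem besselSeries_add_mul_besselSeries_add_two (hμ : 0 ≤ μ) (y : ℝ) :
    besselSeries μ y + y * besselSeries (μ + 2) y = (μ + 1) * besselSeries (μ + 1) y := by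
  have h1 := (summable_besselCoeff_mul_pow (μ := μ + 1) (by linarith) y).mul_left (μ + 1)
  have h2 := (summable_besselCoeff_mul_pow (μ := μ + 2) (by linarith) y).mul_left y
  suffices (μ + 1) * besselSeries (μ + 1) y - besselSeries μ y = y * besselSeries (μ + 2) y by
    linarith
  rw [besselSeries, besselSeries, besselSeries, ← tsum_mul_left, ← tsum_mul_left,
    ← h1.tsum_sub (summable_besselCoeff_mul_pow hμ y), tsum_eq_zero_add' ?_]
  · have h0 : (μ + 1) * (besselCoeff (μ + 1) 0 * y ^ 0) - besselCoeff μ 0 * y ^ 0 = 0 := by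
      rw [← mul_assoc, add_one_mul_besselCoeff_zero (by linarith), sub_self]
    rw [h0, zero_add]
    exact tsum_congr fun k => by rw [← add_one_mul_besselCoeff_succ_sub (by linarith)]; ring
  · exact h2.congr fun k => by rw [← add_one_mul_besselCoeff_succ_sub (by linarith)]; ring

end BesselSeries

section BesselEquation

variable {ν : ℝ} {f : ℝ → ℝ}

def SolvesBesselEq (ν : ℝ) (f : ℝ → ℝ) : Prop :=
  ∀ x > 0, DifferentiableAt ℝ f x ∧ DifferentiableAt ℝ (deriv f) x ∧
    x ^ 2 * deriv (deriv f) x + x * deriv f x + (x ^ 2 - ν ^ 2) * f x = 0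

noncomputable def besselEnergy (ν : ℝ) (f : ℝ → ℝ) (x : ℝ) : ℝ :=
  x * deriv f x ^ 2 + f x * deriv f x + (x - ν ^ 2 / x) * f x ^ 2 + f x ^ 2 / (2 * x)

theorem SolvesBesselEq.hasDerivAt_besselEnergy (hf : SolvesBesselEq ν f) {x : ℝ} (hx : 0 < x) :
    HasDerivAt (besselEnergy ν f) ((4 * ν ^ 2 - 1) / 2 * (f x ^ 2 / x ^ 2)) x := by
  obtain ⟨hf₀, hf₁, hode⟩ := hf x hx
  have hid := hasDerivAt_id x
  refine ((((hid.mul (hf₁.hasDerivAt.pow 2)).add (hf₀.hasDerivAt.mul hf₁.hasDerivAt)).add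
    ((hid.sub ((hasDerivAt_const x (ν ^ 2)).div hid hx.ne')).mul (hf₀.hasDerivAt.pow 2))).add
    ((hf₀.hasDerivAt.pow 2).div (hid.const_mul 2) (by simp [hx.ne']))).congr_deriv ?_
  have hf₂ : deriv (deriv f) x = -(x * deriv f x + (x ^ 2 - ν ^ 2) * f x) / x ^ 2 := by
    field_simp
    linarith
  simp only [Pi.pow_apply, Pi.sub_apply, Pi.div_apply, id, hf₂]
  field_simp
  ring

theorem SolvesBesselEq.mul_v_add_eq_besselEnergy (hf : SolvesBesselEq ν f) {x : ℝ} (hx : 0 < x) :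
    x * v f x + f x ^ 2 / (2 * x) = besselEnergy ν f x := by
  have hf₂ : deriv (deriv f) x = -(x * deriv f x + (x ^ 2 - ν ^ 2) * f x) / x ^ 2 := by
    field_simp
    linarith [(hf x hx).2.2]
  simp only [v, besselEnergy, Function.iterate_succ, Function.iterate_zero, Function.comp_apply,
    Function.id_def, hf₂]
  field_simp
  ring

theorem SolvesBesselEq.besselEnergy_eq_integral (hf : SolvesBesselEq ν f) {x : ℝ} (hx : 0 < x)
    (hint : IntervalIntegrable (fun t => f t ^ 2 / t ^ 2) volume 0 x)
    (hlim : Tendsto (besselEnergy ν f) (𝓝[>] 0) (𝓝 0)) :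
    besselEnergy ν f x = (4 * ν ^ 2 - 1) / 2 * ∫ t in 0..x, f t ^ 2 / t ^ 2 := by
  rw [← intervalIntegral.integral_const_mul,
    intervalIntegral.integral_eq_sub_of_hasDerivAt_of_tendsto hx
    (fun t ht => hf.hasDerivAt_besselEnergy ht.1) (hint.const_mul _) hlim
    ((hf.hasDerivAt_besselEnergy hx).continuousAt.tendsto.mono_left nhdsWithin_le_nhds), sub_zero]

theorem SolvesBesselEq.v_eq (hf : SolvesBesselEq ν f) {x : ℝ} (hx : 0 < x)
    (hint : IntervalIntegrable (fun t => f t ^ 2 / t ^ 2) volume 0 x)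
    (hlim : Tendsto (besselEnergy ν f) (𝓝[>] 0) (𝓝 0)) :
    v f x = -(1 / (2 * x ^ 2)) * f x ^ 2 +
      (4 * ν ^ 2 - 1) / (2 * x) * ∫ t in 0..x, f t ^ 2 / t ^ 2 := by
  have h := hf.mul_v_add_eq_besselEnergy hx
  rw [hf.besselEnergy_eq_integral hx hint hlim] at h
  have hx₀ : x ≠ 0 := hx.ne'
  field_simp at h ⊢
  linear_combination h

end BesselEquation

theorem Real.rpow_two_mul_sub_natCast {t : ℝ} (ht : 0 < t) (ν : ℝ) (n : ℕ) :
    t ^ (2 * ν - n) = (t ^ ν) ^ 2 / t ^ n := by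
  rw [rpow_sub_natCast ht.ne', mul_comm, ← rpow_mul_natCast ht.le]
  norm_num

section RpowMul

variable {ν : ℝ} {f P P' P'' : ℝ → ℝ}

theorem hasDerivAt_rpow_mul {x p : ℝ} (hx : 0 < x) (hP : HasDerivAt P p x) :
    HasDerivAt (fun t => t ^ ν * P t) (x ^ (ν - 1) * (ν * P x + x * p)) x := by
  refine ((hasDerivAt_rpow_const (Or.inl hx.ne')).mul hP).congr_deriv ?_
  rw [rpow_sub_one hx.ne']
  field_simp

theorem hasDerivAt_of_eq_rpow_mul (hf : ∀ t > 0, f t = t ^ ν * P t) {x : ℝ} (hx : 0 < x)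
    (hP : HasDerivAt P (P' x) x) :
    HasDerivAt f (x ^ (ν - 1) * (ν * P x + x * P' x)) x :=
  (hasDerivAt_rpow_mul hx hP).congr_of_eventuallyEq
    (eventually_of_mem (Ioi_mem_nhds hx) hf)

theorem solvesBesselEq_of_eq_rpow_mul (hf : ∀ t > 0, f t = t ^ ν * P t)
    (hP : ∀ t > 0, HasDerivAt P (P' t) t) (hP' : ∀ t > 0, HasDerivAt P' (P'' t) t)
    (hode : ∀ t > 0, t * P'' t + (2 * ν + 1) * P' t + t * P t = 0) :
    SolvesBesselEq ν f := by
  intro x hx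
  have hf' : deriv f =ᶠ[𝓝 x] fun t => t ^ (ν - 1) * (ν * P t + t * P' t) :=
    eventually_of_mem (Ioi_mem_nhds hx) fun t ht =>
      (hasDerivAt_of_eq_rpow_mul hf ht (hP t ht)).deriv
  have hf'' := hasDerivAt_rpow_mul (ν := ν - 1) hx
    (((hP x hx).const_mul ν).add ((hasDerivAt_id x).mul (hP' x hx)))
  refine ⟨(hasDerivAt_of_eq_rpow_mul hf hx (hP x hx)).differentiableAt,
    (hf''.congr_of_eventuallyEq hf').differentiableAt, ?_⟩
  rw [(hf''.congr_of_eventuallyEq hf').deriv, hf'.eq_of_nhds, hf x hx, rpow_sub_one hx.ne',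
    rpow_sub_one hx.ne']
  simp only [Pi.add_apply, Pi.mul_apply, id]
  field_simp
  linear_combination (x ^ ν * x) * hode x hx

theorem tendsto_besselEnergy_of_eq_rpow_mul (hν : 1 / 2 < ν) (hf : ∀ t > 0, f t = t ^ ν * P t)
    (hP : ∀ t, HasDerivAt P (P' t) t) (hP' : ContinuousAt P' 0) :
    Tendsto (besselEnergy ν f) (𝓝[>] 0) (𝓝 0) := by
  set Q := fun t => ν * P t + t * P' t
  have hE : ∀ t > 0, besselEnergy ν f t =
      t ^ (2 * ν - 1) * (Q t ^ 2 + P t * Q t + (t ^ 2 - ν ^ 2 + 1 / 2) * P t ^ 2) := by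
    intro t ht
    have h1 : t ^ (2 * ν - 1) = (t ^ ν) ^ 2 / t := by
      simpa using rpow_two_mul_sub_natCast ht ν 1
    rw [besselEnergy, (hasDerivAt_of_eq_rpow_mul hf ht (hP t)).deriv, hf t ht,
      rpow_sub_one ht.ne', h1]
    field_simp
    ring
  have hpow : Tendsto (fun t : ℝ => t ^ (2 * ν - 1)) (𝓝[>] 0) (𝓝 0) := by
    have := (continuousAt_rpow_const 0 (2 * ν - 1) (Or.inr (by linarith))).tendsto
    rw [zero_rpow (by linarith)] at this
    exact this.mono_left nhdsWithin_le_nhds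
  have hR : ContinuousAt (fun t => Q t ^ 2 + P t * Q t + (t ^ 2 - ν ^ 2 + 1 / 2) * P t ^ 2) 0 := by
    have := (hP 0).continuousAt
    fun_prop
  simpa using (hpow.mul (hR.tendsto.mono_left nhdsWithin_le_nhds)).congr'
    (eventually_nhdsWithin_of_forall (s := Ioi 0) fun t ht => (hE t ht).symm)

theorem intervalIntegrable_sq_div_sq_of_eq_rpow_mul (hν : 1 ≤ ν)
    (hf : ∀ t > 0, f t = t ^ ν * P t) (hP : Continuous P) {x : ℝ} (hx : 0 < x) :
    IntervalIntegrable (fun t => f t ^ 2 / t ^ 2) volume 0 x := by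
  have hcont : Continuous fun t : ℝ => t ^ (2 * ν - 2) * P t ^ 2 :=
    (continuous_rpow_const (by linarith)).mul (hP.pow 2)
  refine (hcont.intervalIntegrable 0 x).congr_uIoo fun t ht => ?_
  rw [uIoo_of_le hx.le] at ht
  have h2 : t ^ (2 * ν - 2) = (t ^ ν) ^ 2 / t ^ 2 := by
    simpa using rpow_two_mul_sub_natCast ht.1 ν 2
  simp only [hf t ht.1, h2]
  ring

end RpowMul

section BesselJ

noncomputable def besselJDivPow (μ x : ℝ) : ℝ := besselSeries μ (x ^ 2 / 4) / 2 ^ μ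

variable {μ : ℝ}

theorem besselJ_eq_rpow_mul_besselJDivPow {x : ℝ} (hx : 0 < x) :
    besselJ μ x = x ^ μ * besselJDivPow μ x := by
  have hx₂ : 0 < x / 2 := by positivity
  calc besselJ μ x = (x / 2) ^ μ * besselSeries μ ((x / 2) ^ 2) := by
        rw [besselJ, besselSeries, ← tsum_mul_left]
        refine tsum_congr fun k => ?_
        rw [rpow_add hx₂, show 2 * (k : ℝ) = ((2 * k : ℕ) : ℝ) by push_cast; ring,
          rpow_natCast, pow_mul, besselCoeff]
        ring
    _ = x ^ μ * besselJDivPow μ x := by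
        rw [besselJDivPow, div_rpow hx.le zero_le_two, show (x / 2) ^ 2 = x ^ 2 / 4 by ring]
        ring

theorem hasDerivAt_besselJDivPow (hμ : 0 ≤ μ) (x : ℝ) :
    HasDerivAt (besselJDivPow μ) (-x * besselJDivPow (μ + 1) x) x := by
  refine (((hasDerivAt_besselSeries hμ (x ^ 2 / 4)).comp x
    ((hasDerivAt_pow 2 x).div_const 4)).div_const (2 ^ μ)).congr_deriv ?_
  rw [besselJDivPow, rpow_add_one two_ne_zero]
  field_simp
  ring

theorem continuous_besselJDivPow (hμ : 0 ≤ μ) : Continuous (besselJDivPow μ) :=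
  continuous_iff_continuousAt.2 fun x => (hasDerivAt_besselJDivPow hμ x).continuousAt

theorem besselJDivPow_add_sq_mul (hμ : 0 ≤ μ) (x : ℝ) :
    besselJDivPow μ x + x ^ 2 * besselJDivPow (μ + 2) x =
      2 * (μ + 1) * besselJDivPow (μ + 1) x := by
  have h := besselSeries_add_mul_besselSeries_add_two hμ (x ^ 2 / 4)
  rw [besselJDivPow, besselJDivPow, besselJDivPow, rpow_add two_pos, rpow_two,
    rpow_add_one two_ne_zero]
  field_simp
  linear_combination 4 * h

theorem solvesBesselEq_besselJ {ν : ℝ} (hν : 0 ≤ ν) : SolvesBesselEq ν (besselJ ν) := by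
  refine solvesBesselEq_of_eq_rpow_mul (P := besselJDivPow ν)
    (P' := fun t => -t * besselJDivPow (ν + 1) t)
    (P'' := fun t => -besselJDivPow (ν + 1) t + t ^ 2 * besselJDivPow (ν + 2) t)
    (fun t ht => besselJ_eq_rpow_mul_besselJDivPow ht) (fun t _ => hasDerivAt_besselJDivPow hν t)
    (fun t _ => ?_) (fun t _ => ?_)
  · refine ((hasDerivAt_id t).neg.mul (hasDerivAt_besselJDivPow (by linarith) t)).congr_deriv ?_
    rw [add_assoc, one_add_one_eq_two]
    simp only [Pi.neg_apply, id]
    ring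
  · linear_combination t * besselJDivPow_add_sq_mul hν t

end BesselJ

theorem stmt_4 (ν : ℝ) (hν : 1 < ν) :
    ∀ x > (0 : ℝ),
      v (besselJ ν) x = -(1 / (2 * x ^ 2)) * (besselJ ν x) ^ 2 +
        (4 * ν ^ 2 - 1) / (2 * x) * ∫ t in (0:ℝ)..x, (besselJ ν t) ^ 2 / t ^ 2 := by
  intro x hx
  have hJ : ∀ t > 0, besselJ ν t = t ^ ν * besselJDivPow ν t :=
    fun t ht => besselJ_eq_rpow_mul_besselJDivPow ht
  have hν₀ : 0 ≤ ν := by linarith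
  exact (solvesBesselEq_besselJ hν₀).v_eq hx
    (intervalIntegrable_sq_div_sq_of_eq_rpow_mul hν.le hJ (continuous_besselJDivPow hν₀) hx)
    (tendsto_besselEnergy_of_eq_rpow_mul (by linarith) hJ (hasDerivAt_besselJDivPow hν₀)
      (continuous_neg.mul (continuous_besselJDivPow (by linarith))).continuousAt)
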